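/- Let N be an even positive integer and let k be an odd positive integer. Then the sum of 2^(p_m + t_m), taken over all divisors m of N such that 2*m^2 divides N*k, equals σ(N/2), the number of positive divisors of N/2. -/

import Mathlib

/-- `p_m`: the number of odd primes dividing `N*m'/m^2` but not `k/m'`, where `m' = gcd(m,k)`. -/
def pm (N k m : ℕ) : ℕ :=
  ((N * Nat.gcd m k / m ^ 2).primeFactors.filter
    (fun p => p ≠ 2 ∧ ¬ p ∣ k / Nat.gcd m k)).card

/-- `t_m`: equal to `0` if `N*m'/m^2` is odd, or `4 ∣ k/m'`, or both
`N*m'/m^2 ≡ 2 (mod 4)` and `k/m'` is odd; and equal to `1` otherwise. -/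
def tm (N k m : ℕ) : ℕ :=
  if Odd (N * Nat.gcd m k / m ^ 2) ∨ 4 ∣ k / Nat.gcd m k ∨
      ((N * Nat.gcd m k / m ^ 2) % 4 = 2 ∧ Odd (k / Nat.gcd m k)) then 0 else 1

/-!
Write `N = 2 ^ (b + 1) * n` with `n` odd and `m = 2 ^ e * m₁`. Since `k` is odd, the condition
`2 * m ^ 2 ∣ N * k` and the term `t_m` only see the 2-adic part: they force `2 * e ≤ b`, and
`t_m = 1` exactly when `4 ∣ N * m' / m ^ 2`, i.e. when `2 * e < b`. What remains is the weight
`[m₁ ^ 2 ∣ n * k] * 2 ^ p_{m₁}`, whose divisor sum is multiplicative in `n`. At a prime power the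
weight of `p ^ e ∣ p ^ α` only depends on `α`, `e` and `κ = v_p(k)`, and its sum
over `e ≤ α` is `α + 1`. The 2-part behaves like an odd prime with exponent `b` and `κ = 0`, so the
total is `σ(2 ^ b) * σ(n) = σ(N / 2)`.
-/

open Finset

theorem Nat.Coprime.sum_divisors_mul_eq {M : Type*} [AddCommMonoid M] (f : ℕ → M) {a b : ℕ}
    (h : a.Coprime b) :
    ∑ m ∈ (a * b).divisors, f m = ∑ d ∈ a.divisors, ∑ e ∈ b.divisors, f (d * e) := by
  rw [h.divisors_mul, sum_map, ← sum_product']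
  exact sum_attach _ (fun p : ℕ × ℕ => f (p.1 * p.2))

lemma factorization_div_gcd_apply {m k : ℕ} (hm : m ≠ 0) (hk : k ≠ 0) (q : ℕ) :
    (k / m.gcd k).factorization q = k.factorization q - m.factorization q := by
  rw [Nat.factorization_div (Nat.gcd_dvd_right m k), Nat.factorization_gcd hm hk]
  simp only [Finsupp.tsub_apply, Finsupp.inf_apply]
  omega

lemma sq_dvd_mul_gcd {N k m : ℕ} (hmN : m ∣ N) (h : m ^ 2 ∣ N * k) : m ^ 2 ∣ N * m.gcd k := by
  rw [← Nat.gcd_mul_left]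
  exact Nat.dvd_gcd (by rw [sq]; exact mul_dvd_mul_right hmN m) h

lemma factorization_mul_gcd_div_sq_apply {N k m : ℕ} (hN : N ≠ 0) (hk : k ≠ 0) (hmN : m ∣ N)
    (h : m ^ 2 ∣ N * k) (q : ℕ) :
    (N * m.gcd k / m ^ 2).factorization q =
      N.factorization q + min (m.factorization q) (k.factorization q) - 2 * m.factorization q := by
  have hm : m ≠ 0 := ne_zero_of_dvd_ne_zero hN hmN
  rw [Nat.factorization_div (sq_dvd_mul_gcd hmN h),
    Nat.factorization_mul hN (Nat.gcd_ne_zero_right hk), Nat.factorization_gcd hm hk,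
    Nat.factorization_pow]
  simp [Finsupp.inf_apply]

lemma pm_eq_card_filter {N k m : ℕ} (hN : N ≠ 0) (hk : k ≠ 0) (hmN : m ∣ N) (h : m ^ 2 ∣ N * k) :
    pm N k m = #{q ∈ N.primeFactors | q ≠ 2 ∧ k.factorization q ≤ m.factorization q ∧
      2 * m.factorization q < N.factorization q + k.factorization q} := by
  have hm : m ≠ 0 := ne_zero_of_dvd_ne_zero hN hmN
  have hkg : k / m.gcd k ≠ 0 :=
    (Nat.div_pos (Nat.gcd_le_right _ hk.bot_lt) (Nat.gcd_pos_of_pos_right _ hk.bot_lt)).ne'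
  unfold pm
  congr 1
  ext q
  by_cases hq : q.Prime
  · simp only [mem_filter, ← Nat.support_factorization, Finsupp.mem_support_iff,
      hq.dvd_iff_one_le_factorization hkg, factorization_div_gcd_apply hm hk,
      factorization_mul_gcd_div_sq_apply hN hk hmN h]
    omega
  · simp [hq]

lemma sq_mul_dvd_mul_mul_iff {N₁ N₂ k m₁ m₂ : ℕ} (h : N₁.Coprime N₂) (h₁ : m₁ ∣ N₁) (h₂ : m₂ ∣ N₂) :
    (m₁ * m₂) ^ 2 ∣ N₁ * N₂ * k ↔ m₁ ^ 2 ∣ N₁ * k ∧ m₂ ^ 2 ∣ N₂ * k := by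
  have c₁ : (m₁ ^ 2).Coprime N₂ := (h.coprime_dvd_left h₁).pow_left 2
  have c₂ : (m₂ ^ 2).Coprime N₁ := (h.symm.coprime_dvd_left h₂).pow_left 2
  have e₁ : m₁ ^ 2 ∣ N₁ * N₂ * k ↔ m₁ ^ 2 ∣ N₁ * k := by rw [mul_right_comm]; exact c₁.dvd_mul_right
  have e₂ : m₂ ^ 2 ∣ N₁ * N₂ * k ↔ m₂ ^ 2 ∣ N₂ * k := by rw [mul_assoc]; exact c₂.dvd_mul_left
  rw [mul_pow, ← e₁, ← e₂]
  exact ⟨fun hd => ⟨dvd_of_mul_right_dvd hd, dvd_of_mul_left_dvd hd⟩,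
    fun hd => ((c₁.coprime_dvd_right h₂).pow_right 2).mul_dvd_of_dvd_of_dvd hd.1 hd.2⟩

lemma factorization_eq_zero_of_mem_primeFactors_of_coprime {A B b q : ℕ} (h : A.Coprime B)
    (hb : b ∣ B) (hq : q ∈ A.primeFactors) : b.factorization q = 0 :=
  Nat.factorization_eq_zero_of_not_dvd fun hqb =>
    (Nat.prime_of_mem_primeFactors hq).not_dvd_one <|
      h.gcd_eq_one ▸ Nat.dvd_gcd (Nat.dvd_of_mem_primeFactors hq) (hqb.trans hb)

lemma pm_mul {N₁ N₂ k m₁ m₂ : ℕ} (h : N₁.Coprime N₂) (hN₁ : N₁ ≠ 0) (hN₂ : N₂ ≠ 0) (hk : k ≠ 0)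
    (h₁ : m₁ ∣ N₁) (h₂ : m₂ ∣ N₂) (hd₁ : m₁ ^ 2 ∣ N₁ * k) (hd₂ : m₂ ^ 2 ∣ N₂ * k) :
    pm (N₁ * N₂) k (m₁ * m₂) = pm N₁ k m₁ + pm N₂ k m₂ := by
  have hm₁ := ne_zero_of_dvd_ne_zero hN₁ h₁
  have hm₂ := ne_zero_of_dvd_ne_zero hN₂ h₂
  rw [pm_eq_card_filter (mul_ne_zero hN₁ hN₂) hk (mul_dvd_mul h₁ h₂)
      ((sq_mul_dvd_mul_mul_iff h h₁ h₂).2 ⟨hd₁, hd₂⟩),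
    pm_eq_card_filter hN₁ hk h₁ hd₁, pm_eq_card_filter hN₂ hk h₂ hd₂, Nat.primeFactors_mul hN₁ hN₂,
    filter_union, card_union_of_disjoint (disjoint_filter_filter h.disjoint_primeFactors)]
  simp only [Nat.factorization_mul hN₁ hN₂, Nat.factorization_mul hm₁ hm₂, Finsupp.add_apply]
  congr 1 <;> refine congrArg card (filter_congr fun q hq => ?_)
  · rw [factorization_eq_zero_of_mem_primeFactors_of_coprime h dvd_rfl hq,
      factorization_eq_zero_of_mem_primeFactors_of_coprime h h₂ hq, add_zero, add_zero]
  · rw [factorization_eq_zero_of_mem_primeFactors_of_coprime h.symm dvd_rfl hq,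
      factorization_eq_zero_of_mem_primeFactors_of_coprime h.symm h₁ hq, zero_add, zero_add]

def divisorWeight (N k m : ℕ) : ℕ := if m ^ 2 ∣ N * k then 2 ^ pm N k m else 0

lemma divisorWeight_mul {N₁ N₂ k m₁ m₂ : ℕ} (h : N₁.Coprime N₂) (hN₁ : N₁ ≠ 0) (hN₂ : N₂ ≠ 0)
    (hk : k ≠ 0) (h₁ : m₁ ∣ N₁) (h₂ : m₂ ∣ N₂) :
    divisorWeight (N₁ * N₂) k (m₁ * m₂) = divisorWeight N₁ k m₁ * divisorWeight N₂ k m₂ := by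
  have hiff := sq_mul_dvd_mul_mul_iff (k := k) h h₁ h₂
  unfold divisorWeight
  by_cases hd : m₁ ^ 2 ∣ N₁ * k ∧ m₂ ^ 2 ∣ N₂ * k
  · rw [if_pos (hiff.2 hd), if_pos hd.1, if_pos hd.2, pm_mul h hN₁ hN₂ hk h₁ h₂ hd.1 hd.2, pow_add]
  · rw [if_neg (mt hiff.1 hd)]
    rcases not_and_or.1 hd with hd' | hd' <;> simp [hd']

lemma sum_divisorWeight_mul {N₁ N₂ k : ℕ} (hk : k ≠ 0) (h : N₁.Coprime N₂) :
    ∑ m ∈ (N₁ * N₂).divisors, divisorWeight (N₁ * N₂) k m =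
      (∑ m ∈ N₁.divisors, divisorWeight N₁ k m) * ∑ m ∈ N₂.divisors, divisorWeight N₂ k m := by
  rcases eq_or_ne N₁ 0 with rfl | hN₁
  · simp
  rcases eq_or_ne N₂ 0 with rfl | hN₂
  · simp
  rw [h.sum_divisors_mul_eq, sum_mul_sum]
  exact sum_congr rfl fun m₁ h₁ => sum_congr rfl fun m₂ h₂ =>
    divisorWeight_mul h hN₁ hN₂ hk (Nat.dvd_of_mem_divisors h₁) (Nat.dvd_of_mem_divisors h₂)

lemma sq_prime_pow_dvd_prime_pow_mul_iff {p α e k : ℕ} (hp : p.Prime) (hk : k ≠ 0) :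
    (p ^ e) ^ 2 ∣ p ^ α * k ↔ 2 * e ≤ α + k.factorization p := by
  rw [← pow_mul, hp.pow_dvd_iff_le_factorization (mul_ne_zero (pow_ne_zero α hp.ne_zero) hk),
    Nat.factorization_mul (pow_ne_zero α hp.ne_zero) hk, Finsupp.add_apply, hp.factorization_pow,
    Finsupp.single_eq_same, mul_comm]

lemma pm_prime_pow {p α e k : ℕ} (hp : p.Prime) (hk : k ≠ 0) (hα : α ≠ 0) (he : e ≤ α)
    (hd : 2 * e ≤ α + k.factorization p) :
    pm (p ^ α) k (p ^ e) =
      if p ≠ 2 ∧ k.factorization p ≤ e ∧ 2 * e < α + k.factorization p then 1 else 0 := by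
  rw [pm_eq_card_filter (pow_ne_zero α hp.ne_zero) hk (pow_dvd_pow p he)
      ((sq_prime_pow_dvd_prime_pow_mul_iff hp hk).2 hd),
    Nat.primeFactors_prime_pow hα hp, filter_singleton, hp.factorization_pow, hp.factorization_pow,
    Finsupp.single_eq_same, Finsupp.single_eq_same]
  split_ifs <;> rfl

def localWeight (α κ e : ℕ) : ℕ :=
  if 2 * e ≤ α + κ then 2 ^ (if κ ≤ e ∧ 2 * e < α + κ then 1 else 0) else 0

lemma divisorWeight_prime_pow {p α e k : ℕ} (hp : p.Prime) (hp2 : p ≠ 2) (hk : k ≠ 0) (hα : α ≠ 0)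
    (he : e ≤ α) : divisorWeight (p ^ α) k (p ^ e) = localWeight α (k.factorization p) e := by
  have hiff := sq_prime_pow_dvd_prime_pow_mul_iff (α := α) (e := e) hp hk
  unfold divisorWeight localWeight
  by_cases hd : 2 * e ≤ α + k.factorization p
  · rw [if_pos (hiff.2 hd), if_pos hd, pm_prime_pow hp hk hα he hd]
    simp only [hp2, ne_eq, not_false_eq_true, true_and]
  · rw [if_neg (mt hiff.1 hd), if_neg hd]

lemma sum_range_localWeight (α κ : ℕ) : ∑ e ∈ range (α + 1), localWeight α κ e = α + 1 := by
  have h : ∀ e, localWeight α κ e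
      = (if 2 * e ≤ α + κ then 1 else 0) + (if κ ≤ e ∧ 2 * e < α + κ then 1 else 0) := by
    intro e; unfold localWeight; split_ifs <;> omega
  simp only [h, sum_add_distrib, sum_boole, Nat.cast_id]
  have h1 : {e ∈ range (α + 1) | 2 * e ≤ α + κ} = range (min (α + 1) ((α + κ) / 2 + 1)) := by
    ext e; simp only [mem_filter, mem_range, lt_min_iff]; omega
  have h2 : {e ∈ range (α + 1) | κ ≤ e ∧ 2 * e < α + κ} = Ico κ (min (α + 1) ((α + κ + 1) / 2)) := by
    ext e; simp only [mem_filter, mem_range, mem_Ico, lt_min_iff]; omega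
  rw [h1, h2, card_range, Nat.card_Ico]
  omega

lemma sum_divisorWeight_prime_pow {p α k : ℕ} (hp : p.Prime) (hp2 : p ≠ 2) (hk : k ≠ 0)
    (hα : α ≠ 0) : ∑ m ∈ (p ^ α).divisors, divisorWeight (p ^ α) k m = α + 1 := by
  rw [Nat.sum_divisors_prime_pow hp]
  exact (sum_congr rfl fun e he => divisorWeight_prime_pow hp hp2 hk hα
    (Nat.lt_succ_iff.1 (mem_range.1 he))).trans (sum_range_localWeight α _)

open ArithmeticFunction in
theorem sum_divisorWeight_of_odd {n k : ℕ} (hn : Odd n) (hk : k ≠ 0) :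
    ∑ m ∈ n.divisors, divisorWeight n k m = #n.divisors := by
  have hn0 : n ≠ 0 := hn.pos.ne'
  rw [Nat.multiplicative_factorization (fun N => ∑ m ∈ N.divisors, divisorWeight N k m)
      (fun _ _ => sum_divisorWeight_mul hk) (by simp [divisorWeight, pm]) hn0,
    ← sigma_zero_apply, isMultiplicative_sigma.multiplicative_factorization _ hn0]
  refine Finsupp.prod_congr fun p hp => ?_
  have hpn : p ∈ n.primeFactors := Nat.support_factorization n ▸ hp
  have hp2 : p ≠ 2 := fun h2 => hn.not_two_dvd_nat (h2 ▸ Nat.dvd_of_mem_primeFactors hpn)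
  rw [sum_divisorWeight_prime_pow (Nat.prime_of_mem_primeFactors hpn) hp2 hk
      (Finsupp.mem_support_iff.1 hp), sigma_zero_apply_prime_pow (Nat.prime_of_mem_primeFactors hpn)]

lemma two_pow_succ_mul_mod_four_eq_two_iff {j y : ℕ} (hy : Odd y) :
    2 ^ (j + 1) * y % 4 = 2 ↔ j = 0 := by
  rcases j with _ | j
  · obtain ⟨r, rfl⟩ := hy
    omega
  · rw [show 2 ^ (j + 1 + 1) * y = 4 * (2 ^ j * y) by ring, Nat.mul_mod_right]
    omega

lemma two_mul_sq_dvd_iff {b e n k m : ℕ} (hn : Odd n) (hk : Odd k) (hm : m ∣ n) :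
    2 * (2 ^ e * m) ^ 2 ∣ 2 ^ (b + 1) * n * k ↔ 2 * e ≤ b ∧ m ^ 2 ∣ n * k := by
  have hm2 : Nat.Coprime 2 (m ^ 2) := Nat.coprime_two_left.2 ((hn.of_dvd_nat hm).pow)
  have hnk2 : Nat.Coprime 2 (n * k) := Nat.coprime_two_left.2 (hn.mul hk)
  rw [show 2 * (2 ^ e * m) ^ 2 = 2 ^ (2 * e + 1) * m ^ 2 by ring, mul_assoc]
  constructor
  · intro hd
    refine ⟨?_, ?_⟩
    · have h := (hnk2.pow_left _).dvd_mul_right.1 (dvd_of_mul_right_dvd hd)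
      have := (Nat.pow_dvd_pow_iff_le_right one_lt_two).1 h
      omega
    · exact (hm2.symm.pow_right _).dvd_mul_left.1 (dvd_of_mul_left_dvd hd)
  · rintro ⟨he, hd⟩
    exact ((hm2.pow_left _).mul_dvd_of_dvd_of_dvd
      (dvd_mul_of_dvd_left (pow_dvd_pow 2 (by omega)) _) (dvd_mul_of_dvd_right hd _))

lemma tm_two_pow_mul {b e n k m : ℕ} (hn : Odd n) (hk : Odd k) (hm : m ∣ n) (hd : m ^ 2 ∣ n * k)
    (he : 2 * e ≤ b) : tm (2 ^ (b + 1) * n) k (2 ^ e * m) = if 2 * e < b then 1 else 0 := by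
  have hg : (2 ^ e * m).gcd k = m.gcd k :=
    Nat.Coprime.gcd_mul_left_cancel m ((Nat.coprime_two_left.2 hk).pow_left e)
  obtain ⟨y, hy⟩ := sq_dvd_mul_gcd hm hd
  have hy_odd : Odd y :=
    (hn.mul (hk.of_dvd_nat (Nat.gcd_dvd_right m k))).of_dvd_nat (Dvd.intro_left _ hy.symm)
  have hkg_odd : Odd (k / m.gcd k) := hk.of_dvd_nat (Nat.div_dvd_of_dvd (Nat.gcd_dvd_right m k))
  obtain ⟨j, rfl⟩ : ∃ j, b = 2 * e + j := ⟨b - 2 * e, by omega⟩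
  have hx : 2 ^ (2 * e + j + 1) * n * m.gcd k / (2 ^ e * m) ^ 2 = 2 ^ (j + 1) * y := by
    rw [mul_assoc, hy]
    refine Nat.div_eq_of_eq_mul_left (pow_pos (mul_pos (by positivity) (hn.of_dvd_nat hm).pos) 2) ?_
    ring
  have hx_even : ¬ Odd (2 ^ (j + 1) * y) :=
    Nat.not_odd_iff_even.2 ((Nat.even_pow.2 ⟨even_two, j.succ_ne_zero⟩).mul_right y)
  have h4 : ¬ 4 ∣ k / m.gcd k := fun h4 =>
    Nat.not_even_iff_odd.2 hkg_odd (even_iff_two_dvd.2 ((by norm_num : 2 ∣ 4).trans h4))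
  unfold tm
  rw [hg, hx]
  simp only [hx_even, h4, hkg_odd, two_pow_succ_mul_mod_four_eq_two_iff hy_odd, false_or, and_true]
  split_ifs <;> omega

lemma pm_two_pow_mul {b e n k m : ℕ} (hn : Odd n) (hk : Odd k) (hm : m ∣ n) (hd : m ^ 2 ∣ n * k)
    (he : 2 * e ≤ b) : pm (2 ^ (b + 1) * n) k (2 ^ e * m) = pm n k m := by
  have hd₂ : 2 * e ≤ b + 1 + k.factorization 2 := by omega
  rw [pm_mul (Nat.Coprime.pow_left _ (Nat.coprime_two_left.2 hn)) (by positivity) hn.pos.ne'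
      hk.pos.ne' (pow_dvd_pow 2 (by omega)) hm
      ((sq_prime_pow_dvd_prime_pow_mul_iff Nat.prime_two hk.pos.ne').2 hd₂) hd,
    pm_prime_pow Nat.prime_two hk.pos.ne' (b.succ_ne_zero) (by omega) hd₂]
  simp

lemma summand_two_pow_mul {b e n k m : ℕ} (hn : Odd n) (hk : Odd k) (hm : m ∣ n) :
    (if 2 * (2 ^ e * m) ^ 2 ∣ 2 ^ (b + 1) * n * k then
        2 ^ (pm (2 ^ (b + 1) * n) k (2 ^ e * m) + tm (2 ^ (b + 1) * n) k (2 ^ e * m)) else 0) =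
      localWeight b 0 e * divisorWeight n k m := by
  have hiff := two_mul_sq_dvd_iff (b := b) (e := e) hn hk hm
  unfold localWeight divisorWeight
  by_cases hd : 2 * e ≤ b ∧ m ^ 2 ∣ n * k
  · rw [if_pos (hiff.2 hd), if_pos (by omega), if_pos hd.2, pm_two_pow_mul hn hk hm hd.2 hd.1,
      tm_two_pow_mul hn hk hm hd.2 hd.1, pow_add, mul_comm]
    simp
  · rw [if_neg (mt hiff.1 hd)]
    rcases not_and_or.1 hd with hd' | hd' <;> simp [hd']

theorem sum_over_divisors_even_odd_case (N k : ℕ) (hN : 0 < N) (hNeven : Even N)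
    (hk : 0 < k) (hkodd : Odd k) :
    ∑ m ∈ N.divisors.filter (fun m => 2 * m ^ 2 ∣ N * k), 2 ^ (pm N k m + tm N k m)
      = (N / 2).divisors.card := by
  obtain ⟨a, n, hn, rfl⟩ := Nat.exists_eq_two_pow_mul_odd hN.ne'
  obtain ⟨b, rfl⟩ : ∃ b, a = b + 1 := Nat.exists_eq_succ_of_ne_zero fun ha => by
    simp [ha, ← Nat.not_odd_iff_even, hn] at hNeven
  have hcop : ∀ c, (2 ^ c).Coprime n := fun c => Nat.Coprime.pow_left c (Nat.coprime_two_left.2 hn)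
  have hlast : localWeight b 0 (b + 1) = 0 := if_neg (by omega)
  rw [sum_filter, (hcop _).sum_divisors_mul_eq, Nat.sum_divisors_prime_pow Nat.prime_two]
  rw [sum_congr rfl fun e _ => sum_congr rfl fun m hm =>
      summand_two_pow_mul hn hkodd (Nat.dvd_of_mem_divisors hm),
    ← sum_mul_sum, sum_divisorWeight_of_odd hn hk.ne', sum_range_succ, sum_range_localWeight, hlast,
    add_zero, show 2 ^ (b + 1) * n = 2 * (2 ^ b * n) by ring, Nat.mul_div_cancel_left _ two_pos,
    (hcop b).card_divisors_mul, Nat.divisors_prime_pow Nat.prime_two, card_map, card_range]
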